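/- arXiv:0903.0112 — 3 statements merged into one kernel-verified Lean document; each statement's English description precedes it below -/
import Mathlib

section
/- For every integer k ≥ 1, the group G_k with presentation ⟨x, y | x y x⁻¹ = y⁻¹, x² = y^k⟩ is isomorphic to the dicyclic group of order 4k (Mathlib's QuaternionGroup k). -/
/-!
The assignment `x ↦ xa 0`, `y ↦ a 1` respects both relations, so it defines a homomorphism from
the presented group onto `QuaternionGroup k`. Conversely, in any group where `x y x⁻¹ = y⁻¹` and
`x² = yᵏ`, the element `yᵏ = x²` commutes with `x` but is also inverted by it, so `y^{2k} = 1`;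
hence `a i ↦ yⁱ`, `xa i ↦ x yⁱ` is a well-defined homomorphism out of `QuaternionGroup k`.
The two homomorphisms are mutually inverse, as one checks on generators.
-/

/-- The relations of the generalised quaternion group `Q_{4k}`:
`x y x⁻¹ y` and `x² y^{-k}`, where `x = FreeGroup.of 0` and `y = FreeGroup.of 1`. -/
def quaternionRels (k : ℕ) : Set (FreeGroup (Fin 2)) :=
  {FreeGroup.of 0 * FreeGroup.of 1 * (FreeGroup.of 0)⁻¹ * FreeGroup.of 1,
   FreeGroup.of 0 ^ 2 * FreeGroup.of 1 ^ (-(k : ℤ))}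

section Group

variable {G : Type*} [Group G] {x y : G}

theorem zpow_eq_zpow_zmodCast {n : ℕ} (hy : y ^ n = 1) {m : ℤ} {i : ZMod n}
    (h : (m : ZMod n) = i) : y ^ m = y ^ (i.cast : ℤ) :=
  zpow_eq_zpow_iff_modEq.mpr <|
    ((ZMod.intCast_eq_intCast_iff _ _ n).mp (by rw [h, ZMod.intCast_zmod_cast])).of_dvd <|
      Int.natCast_dvd_natCast.mpr (orderOf_dvd_of_pow_eq_one hy)

theorem conj_zpow_eq_zpow_neg (hconj : x * y * x⁻¹ = y⁻¹) (m : ℤ) :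
    x * y ^ m * x⁻¹ = y ^ (-m) := by
  rw [← conj_zpow, hconj, inv_zpow']

theorem zpow_mul_eq_mul_zpow_neg (hconj : x * y * x⁻¹ = y⁻¹) (m : ℤ) :
    y ^ m * x = x * y ^ (-m) := by
  have h := conj_zpow_eq_zpow_neg hconj (-m)
  rw [neg_neg] at h
  rw [← h, inv_mul_cancel_right]

theorem pow_two_mul_eq_one_of_conj_eq_inv {n : ℕ} (hconj : x * y * x⁻¹ = y⁻¹)
    (hsq : x ^ 2 = y ^ n) : y ^ (2 * n) = 1 := by
  have hsymm : y ^ (n : ℤ) = y ^ (-(n : ℤ)) := by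
    rw [← conj_zpow_eq_zpow_neg hconj, zpow_natCast, ← hsq]
    group
  rw [two_mul, pow_add]
  nth_rw 1 [← zpow_natCast]
  rw [hsymm, zpow_neg, zpow_natCast, inv_mul_cancel]

end Group

namespace QuaternionGroup

variable {n : ℕ}

theorem inv_a (i : ZMod (2 * n)) : (a i)⁻¹ = a (-i) := rfl

theorem inv_xa (i : ZMod (2 * n)) : (xa i)⁻¹ = xa ((n : ZMod (2 * n)) + i) := rfl

theorem a_one_zpow (m : ℤ) : (a 1 : QuaternionGroup n) ^ m = a m := by
  cases m with
  | ofNat m => simp [a_one_pow]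
  | negSucc m => simp [zpow_negSucc, a_one_pow, inv_a]

section lift

variable {G : Type*} [Group G] {x y : G}

/-- The exponent `ZMod.cast i : ℤ` is `i` itself when `n = 0` and `i.val` otherwise. -/
def lift (hconj : x * y * x⁻¹ = y⁻¹) (hsq : x ^ 2 = y ^ n) : QuaternionGroup n →* G where
  toFun
    | a i => y ^ (i.cast : ℤ)
    | xa i => x * y ^ (i.cast : ℤ)
  map_one' := by
    change y ^ ((0 : ZMod (2 * n)).cast : ℤ) = 1
    rw [ZMod.cast_zero, zpow_zero]
  map_mul' := by
    have hy := pow_two_mul_eq_one_of_conj_eq_inv hconj hsq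
    have hcast (m : ℤ) (i : ZMod (2 * n)) (h : (m : ZMod (2 * n)) = i) :=
      (zpow_eq_zpow_zmodCast hy h).symm
    rintro (i | i) (j | j) <;> simp only [a_mul_a, a_mul_xa, xa_mul_a, xa_mul_xa]
    · rw [← zpow_add]
      exact hcast _ _ (by push_cast [ZMod.intCast_zmod_cast]; ring)
    · rw [← mul_assoc, zpow_mul_eq_mul_zpow_neg hconj, mul_assoc, ← zpow_add]
      exact congrArg (x * ·) (hcast _ _ (by push_cast [ZMod.intCast_zmod_cast]; ring))
    · rw [mul_assoc, ← zpow_add]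
      exact congrArg (x * ·) (hcast _ _ (by push_cast [ZMod.intCast_zmod_cast]; ring))
    · rw [mul_assoc, ← mul_assoc (y ^ _), zpow_mul_eq_mul_zpow_neg hconj, ← mul_assoc,
        ← mul_assoc, ← sq, hsq, mul_assoc, ← zpow_natCast, ← zpow_add, ← zpow_add]
      exact hcast _ _ (by push_cast [ZMod.intCast_zmod_cast]; ring)

variable (hconj : x * y * x⁻¹ = y⁻¹) (hsq : x ^ 2 = y ^ n)

@[simp]
theorem lift_a (i : ZMod (2 * n)) : lift hconj hsq (a i) = y ^ (i.cast : ℤ) := rfl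

@[simp]
theorem lift_xa (i : ZMod (2 * n)) : lift hconj hsq (xa i) = x * y ^ (i.cast : ℤ) := rfl

theorem lift_a_one : lift hconj hsq (a 1) = y := by
  rw [lift_a, ← zpow_eq_zpow_zmodCast (pow_two_mul_eq_one_of_conj_eq_inv hconj hsq) Int.cast_one,
    zpow_one]

theorem lift_xa_zero : lift hconj hsq (xa 0) = x := by
  rw [lift_xa, ZMod.cast_zero, zpow_zero, mul_one]

end lift

end QuaternionGroup

namespace quaternionRels

open QuaternionGroup PresentedGroup

variable (k : ℕ)

theorem conj_eq_inv : (of 0 * of 1 * (of 0)⁻¹ : PresentedGroup (quaternionRels k)) = (of 1)⁻¹ := by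
  have h := one_of_mem (rels := quaternionRels k) (Or.inl rfl)
  simp only [map_mul, map_inv] at h
  exact mul_eq_one_iff_eq_inv.mp h

theorem sq_eq_pow : (of 0 ^ 2 : PresentedGroup (quaternionRels k)) = of 1 ^ k := by
  have h := one_of_mem (rels := quaternionRels k) (Or.inr rfl)
  simp only [map_mul, map_pow, zpow_neg, zpow_natCast] at h
  exact mul_inv_eq_one.mp h

def toQuaternionGroup : PresentedGroup (quaternionRels k) →* QuaternionGroup k :=
  toGroup (f := ![xa 0, a 1]) <| by
    rintro r (rfl | rfl)
    · simp only [Matrix.cons_val_zero, Matrix.cons_val_one, map_mul, map_inv,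
        FreeGroup.lift_apply_of, inv_xa, xa_mul_a, xa_mul_xa, a_mul_a]
      have h2k : (2 * k : ZMod (2 * k)) = 0 := by exact_mod_cast ZMod.natCast_self (2 * k)
      rw [one_def]
      congr 1
      linear_combination h2k
    · simp [xa_sq]

def ofQuaternionGroup : QuaternionGroup k →* PresentedGroup (quaternionRels k) :=
  QuaternionGroup.lift (conj_eq_inv k) (sq_eq_pow k)

def mulEquivQuaternionGroup : PresentedGroup (quaternionRels k) ≃* QuaternionGroup k :=
  MonoidHom.toMulEquiv (toQuaternionGroup k) (ofQuaternionGroup k)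
    (PresentedGroup.ext fun i => by
      rw [MonoidHom.comp_apply, toQuaternionGroup, toGroup.of]
      fin_cases i
      · exact lift_xa_zero _ _
      · exact lift_a_one _ _)
    (by ext (i | i) <;> simp [toQuaternionGroup, ofQuaternionGroup, a_one_zpow])

end quaternionRels

theorem presented_quaternion_iso_general (k : ℕ) :
    Nonempty (PresentedGroup (quaternionRels k) ≃* QuaternionGroup k) :=
  ⟨quaternionRels.mulEquivQuaternionGroup k⟩

theorem presented_quaternion_iso (k : ℕ) (hk : 1 ≤ k) :
    Nonempty (PresentedGroup (quaternionRels k) ≃* QuaternionGroup k) :=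
  presented_quaternion_iso_general k
end

section
/- For every integer k ≥ 1, the image of the generator x in the group G_k with presentation ⟨x, y | x y x⁻¹ = y⁻¹, x² = y^k⟩ has order exactly 4. -/
/-!
Since `x²` commutes with `x`, conjugating `x² = yᵏ` by `x` gives `yᵏ = y⁻ᵏ`, so
`x⁴ = y²ᵏ = 1`. Conversely, `x ↦ xa 0`, `y ↦ a 1` satisfies the relations in Mathlib's
`QuaternionGroup k`, where `xa 0` has order `4`; so the order of `x` is also a multiple of `4`.
-/

theorem pow_four_eq_one_of_conj_eq_inv {G : Type*} [Group G] {x y : G} {k : ℕ}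
    (hconj : x * y * x⁻¹ = y⁻¹) (hsq : x ^ 2 = y ^ k) : x ^ 4 = 1 := by
  have hyk : y ^ k = (y ^ k)⁻¹ :=
    calc y ^ k = x * x ^ 2 * x⁻¹ := by rw [← hsq]; group
      _ = (x * y * x⁻¹) ^ k := by rw [hsq, conj_pow]
      _ = (y ^ k)⁻¹ := by rw [hconj, inv_pow]
  calc x ^ 4 = (y ^ k)⁻¹ * y ^ k := by rw [← hyk, ← hsq]; group
    _ = 1 := inv_mul_cancel _

theorem forall_lift_quaternionRels_eq_one_iff {G : Type*} [Group G] (k : ℕ) (f : Fin 2 → G) :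
    (∀ r ∈ quaternionRels k, FreeGroup.lift f r = 1) ↔
      f 0 * f 1 * (f 0)⁻¹ = (f 1)⁻¹ ∧ f 0 ^ 2 = f 1 ^ k := by
  simp only [quaternionRels, Set.mem_insert_iff, Set.mem_singleton_iff, forall_eq_or_imp,
    forall_eq, map_mul, map_inv, map_pow, FreeGroup.lift_apply_of, zpow_neg,
    zpow_natCast, mul_eq_one_iff_eq_inv, inv_inv]

theorem PresentedGroup.quaternionRels_relations (k : ℕ) :
    of (rels := quaternionRels k) 0 * of 1 * (of 0)⁻¹ = (of 1)⁻¹ ∧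
      of (rels := quaternionRels k) 0 ^ 2 = of 1 ^ k := by
  have hlift : FreeGroup.lift of = mk (quaternionRels k) :=
    FreeGroup.ext_hom _ _ fun _ ↦ FreeGroup.lift_apply_of
  refine (forall_lift_quaternionRels_eq_one_iff k of).1 fun r hr ↦ ?_
  rw [hlift]
  exact one_of_mem hr

namespace QuaternionGroup

theorem xa_mul_a_mul_inv_xa {n : ℕ} (i j : ZMod (2 * n)) :
    xa i * a j * (xa i)⁻¹ = (a j)⁻¹ :=
  mul_inv_eq_of_eq_mul <| by
    change xa (i + j) = a (-j) * xa i
    rw [a_mul_xa, sub_neg_eq_add]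

def ofPresented (k : ℕ) : PresentedGroup (quaternionRels k) →* QuaternionGroup k :=
  PresentedGroup.toGroup (f := ![xa 0, a 1]) <|
    (forall_lift_quaternionRels_eq_one_iff k _).2
      ⟨xa_mul_a_mul_inv_xa 0 1, by
        simp only [Matrix.cons_val_zero, Matrix.cons_val_one, xa_sq, a_one_pow]⟩

theorem ofPresented_of_zero (k : ℕ) : ofPresented k (PresentedGroup.of 0) = xa 0 :=
  PresentedGroup.toGroup.of _

end QuaternionGroup

theorem presented_quaternion_orderOf_x (k : ℕ) (hk : 1 ≤ k) :
    orderOf (PresentedGroup.of (rels := quaternionRels k) 0) = 4 := by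
  have : NeZero k := ⟨by omega⟩
  obtain ⟨hconj, hsq⟩ := PresentedGroup.quaternionRels_relations k
  refine Nat.dvd_antisymm (orderOf_dvd_of_pow_eq_one (pow_four_eq_one_of_conj_eq_inv hconj hsq)) ?_
  simpa only [QuaternionGroup.ofPresented_of_zero, QuaternionGroup.orderOf_xa] using
    orderOf_map_dvd (QuaternionGroup.ofPresented k) (PresentedGroup.of 0)
end

section
/- For every integer k ≥ 1, the cyclic subgroup generated by the image of the generator y in the group G_k with presentation ⟨x, y | x y x⁻¹ = y⁻¹, x² = y^k⟩ has index 2 in G_k, and is a normal subgroup of G_k. -/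
/-!
Conjugation by `x` inverts `y`, so `⟨y⟩` is normalised by both generators and hence normal.
Modulo `⟨y⟩` the group is generated by the image of `x`, so the index of `⟨y⟩` is the order of
that image. It squares to `1` because `x² = yᵏ`, and it is not `1` because the map sending `x` to
the generator of `ZMod 2` and `y` to `0` kills `⟨y⟩` but not `x`; hence the index is `2`.
-/

namespace Subgroup

variable {G : Type*} [Group G] {a b : G}

theorem normal_zpowers_of_conj_eq_inv (hgen : closure {a, b} = ⊤) (hconj : a * b * a⁻¹ = b⁻¹) :
    (zpowers b).Normal := by
  rw [← normalizer_eq_top_iff, eq_top_iff, ← hgen, closure_le, Set.insert_subset_iff,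
    Set.singleton_subset_iff]
  refine ⟨?_, le_normalizer (mem_zpowers b)⟩
  rw [SetLike.mem_coe, mem_normalizer_iff_map_conj_eq, MonoidHom.map_zpowers]
  simp only [MonoidHom.coe_coe, MulAut.conj_apply, hconj, zpowers_inv]

theorem index_zpowers_eq_orderOf (hgen : closure {a, b} = ⊤) [(zpowers b).Normal] :
    (zpowers b).index = orderOf (a : G ⧸ zpowers b) := by
  have hquot : zpowers (a : G ⧸ zpowers b) = ⊤ := by
    rw [← MonoidHom.range_eq_top.2 (QuotientGroup.mk'_surjective (zpowers b)),
      MonoidHom.range_eq_map, ← hgen, MonoidHom.map_closure, Set.image_pair,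
      QuotientGroup.mk'_apply, QuotientGroup.mk'_apply,
      (QuotientGroup.eq_one_iff b).2 (mem_zpowers b), Set.pair_comm, closure_insert_one]
    exact zpowers_eq_closure (a : G ⧸ zpowers b)
  rw [index_eq_card, ← Nat.card_zpowers, hquot, card_top]

end Subgroup

abbrev QuaternionPresented (k : ℕ) := PresentedGroup (quaternionRels k)

namespace QuaternionPresented

variable (k : ℕ)

noncomputable abbrev x : QuaternionPresented k := PresentedGroup.of 0

noncomputable abbrev y : QuaternionPresented k := PresentedGroup.of 1

theorem x_mul_y_mul_x_inv : x k * y k * (x k)⁻¹ = (y k)⁻¹ := by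
  have h := PresentedGroup.one_of_mem (rels := quaternionRels k) (Set.mem_insert _ _)
  simp only [Fin.isValue, map_mul, map_inv, mul_eq_one_iff_eq_inv] at h
  exact h

theorem x_sq : x k ^ 2 = y k ^ k := by
  have h := PresentedGroup.one_of_mem (rels := quaternionRels k) (Set.mem_insert_of_mem _ rfl)
  simp only [zpow_neg, zpow_natCast, map_mul, map_pow, map_inv, mul_eq_one_iff_eq_inv, inv_inv] at h
  exact h

theorem closure_x_y : Subgroup.closure {x k, y k} = ⊤ := by
  rw [← PresentedGroup.closure_range_of]
  congr 1
  ext g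
  simp [Fin.exists_fin_two, eq_comm]

noncomputable def parity : QuaternionPresented k →* Multiplicative (ZMod 2) :=
  PresentedGroup.toGroup (f := ![Multiplicative.ofAdd 1, 1]) (by
    rintro r (rfl | rfl)
    · simp
    · simp only [zpow_neg, zpow_natCast, map_mul, map_pow, map_inv, FreeGroup.lift_apply_of,
        Matrix.cons_val_zero, Matrix.cons_val_one, Matrix.cons_val_fin_one, one_pow, inv_one, mul_one]
      decide)

theorem x_notMem_zpowers_y : x k ∉ Subgroup.zpowers (y k) := by
  intro hx
  have : parity k (x k) = 1 := by
    obtain ⟨n, hn⟩ := hx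
    rw [← hn, map_zpow, parity, PresentedGroup.toGroup.of]
    simp
  rw [parity, PresentedGroup.toGroup.of] at this
  exact absurd this (by decide)

end QuaternionPresented

theorem presented_quaternion_zpowers_y_index_two_normal_general (k : ℕ) :
    (Subgroup.zpowers (PresentedGroup.of (rels := quaternionRels k) 1)).index = 2 ∧
    (Subgroup.zpowers (PresentedGroup.of (rels := quaternionRels k) 1)).Normal := by
  open QuaternionPresented in
  have hnormal : (Subgroup.zpowers (y k)).Normal :=
    Subgroup.normal_zpowers_of_conj_eq_inv (closure_x_y k) (x_mul_y_mul_x_inv k)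
  refine ⟨?_, hnormal⟩
  rw [Subgroup.index_zpowers_eq_orderOf (closure_x_y k)]
  refine orderOf_eq_prime ?_ ?_
  · rw [← QuotientGroup.mk_pow, x_sq, QuotientGroup.eq_one_iff]
    exact Subgroup.pow_mem _ (Subgroup.mem_zpowers _) k
  · exact (QuotientGroup.eq_one_iff _).not.2 (x_notMem_zpowers_y k)

theorem presented_quaternion_zpowers_y_index_two_normal (k : ℕ) (hk : 1 ≤ k) :
    (Subgroup.zpowers (PresentedGroup.of (rels := quaternionRels k) 1)).index = 2 ∧
    (Subgroup.zpowers (PresentedGroup.of (rels := quaternionRels k) 1)).Normal :=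
  presented_quaternion_zpowers_y_index_two_normal_general k
end
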